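/- arXiv:2604.23705 — 9 statements merged into one kernel-verified Lean document; each statement's English description precedes it below -/
import Mathlib

section
/- Let σ : ℝ → ℝ be positively homogeneous of degree k > 0 with k ≠ 1, i.e., σ(λz) = λ^k σ(z) for all λ > 0 and z ∈ ℝ. Then for any M ∈ ℝ^{d×d} with M ≠ 0 and any matrices W_up, V_up ∈ ℝ^{N×d}, W_down, V_down ∈ ℝ^{d×N}, there exists x ∈ ℝ^d such that M x + W_down σ(W_up x) ≠ V_down σ(V_up x). -/
theorem homogeneous_impossibility
    (d N : ℕ) (hd : 1 ≤ d) (hNd : d ≤ N)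
    (σ : ℝ → ℝ) (k : ℝ) (hk : 0 < k) (hk1 : k ≠ 1)
    (hσ : ∀ lam : ℝ, 0 < lam → ∀ z : ℝ, σ (lam * z) = lam ^ k * σ z)
    (M : Matrix (Fin d) (Fin d) ℝ) (hM : M ≠ 0)
    (Wup Vup : Matrix (Fin N) (Fin d) ℝ)
    (Wdown Vdown : Matrix (Fin d) (Fin N) ℝ) :
    ∃ x : Fin d → ℝ,
      M.mulVec x + Wdown.mulVec (fun i => σ (Wup.mulVec x i))
        ≠ Vdown.mulVec (fun i => σ (Vup.mulVec x i)) := by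
  by_contra h
  push_neg at h
  obtain ⟨i, j, hij⟩ : ∃ i j, M i j ≠ 0 := by
    by_contra hc
    push_neg at hc
    exact hM (Matrix.ext fun i j => by simpa using hc i j)
  set x0 : Fin d → ℝ := Pi.single j 1 with hx0
  have hMx0 : M.mulVec x0 i ≠ 0 := by
    have : M.mulVec x0 i = M i j := by
      simp [hx0, Matrix.mulVec_single]
    rw [this]; exact hij
  have key : ∀ (A : Matrix (Fin N) (Fin d) ℝ),
      (fun n => σ (A.mulVec ((2:ℝ) • x0) n)) = (2:ℝ) ^ k • fun n => σ (A.mulVec x0 n) := by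
    intro A
    funext n
    have h2 : A.mulVec ((2:ℝ) • x0) n = 2 * A.mulVec x0 n := by
      rw [Matrix.mulVec_smul]; simp [smul_eq_mul]
    rw [h2, hσ 2 (by norm_num)]
    simp [smul_eq_mul]
  have h1 := h x0
  have h2 := h ((2:ℝ) • x0)
  rw [key Wup, key Vup, Matrix.mulVec_smul, Matrix.mulVec_smul, Matrix.mulVec_smul] at h2
  have h1' := congrFun h1 i
  have h2' := congrFun h2 i
  simp only [Pi.add_apply, Pi.smul_apply, smul_eq_mul] at h1' h2'
  have e : (2:ℝ) * M.mulVec x0 i = (2:ℝ) ^ k * M.mulVec x0 i := by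
    linear_combination h2' - (2:ℝ) ^ k * h1'
  have h2k : (2:ℝ) ^ k = 2 := (mul_right_cancel₀ hMx0 e).symm
  apply hk1
  have hlog : k * Real.log 2 = Real.log 2 := by
    have := Real.log_rpow (by norm_num : (0:ℝ) < 2) k
    rw [h2k] at this
    linarith
  have hl2 : Real.log 2 ≠ 0 := by
    have : (1:ℝ) < 2 := one_lt_two
    exact ne_of_gt (Real.log_pos this)
  have : k * Real.log 2 = 1 * Real.log 2 := by linarith
  exact mul_right_cancel₀ hl2 this
end

section
/- Let g : ℝ → ℝ be differentiable at 0 with g(0) = 0, and let M ∈ ℝ^{d×d} with M ≠ 0. Then for any gated MLPs with weight matrices (W_down, W_gate, W_val) and (V_down, V_gate, V_val), there exists x ∈ ℝ^d with M x + W_down (g(W_gate x) ⊙ (W_val x)) ≠ V_down (g(V_gate x) ⊙ (V_val x)). -/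
/-!
A gated unit `x ↦ g(⟪w, x⟫) · ⟪v, x⟫` is a product of two functions vanishing at the origin, so
every gated MLP has zero derivative at `0`. Differentiating `M x + F x = G x` at `0` for two gated
MLPs `F`, `G` therefore gives `M = 0`.
-/

open Matrix

variable {𝕜 : Type*} [NontriviallyNormedField 𝕜]

theorem hasFDerivAt_mul_zero_of_eq_zero {E 𝔸 : Type*} [NormedAddCommGroup E] [NormedSpace 𝕜 E]
    [NormedCommRing 𝔸] [NormedAlgebra 𝕜 𝔸] {c e : E → 𝔸} {x : E}
    (hc : DifferentiableAt 𝕜 c x) (he : DifferentiableAt 𝕜 e x) (hcx : c x = 0) (hex : e x = 0) :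
    HasFDerivAt (c * e) (0 : E →L[𝕜] 𝔸) x := by
  convert hc.hasFDerivAt.mul he.hasFDerivAt using 1
  ext; simp [hcx, hex]

variable [CompleteSpace 𝕜] {ι m n : Type*} [Fintype ι] [Fintype m] [Fintype n]

def gatedMLP (g : 𝕜 → 𝕜) (Wdown : Matrix m ι 𝕜) (Wgate Wval : Matrix ι n 𝕜) (x : n → 𝕜) :
    m → 𝕜 :=
  Wdown *ᵥ fun i => g ((Wgate *ᵥ x) i) * (Wval *ᵥ x) i

theorem hasFDerivAt_gatedMLP_zero {g : 𝕜 → 𝕜} (hg0 : g 0 = 0) (hg : DifferentiableAt 𝕜 g 0)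
    (Wdown : Matrix m ι 𝕜) (Wgate Wval : Matrix ι n 𝕜) :
    HasFDerivAt (gatedMLP g Wdown Wgate Wval) (0 : (n → 𝕜) →L[𝕜] m → 𝕜) 0 := by
  have hlin : ∀ (W : Matrix ι n 𝕜) (i : ι), DifferentiableAt 𝕜 (fun x => (W *ᵥ x) i) 0 :=
    fun W => differentiableAt_pi.1 W.mulVecLin.toContinuousLinearMap.differentiableAt
  have hunits : HasFDerivAt (fun x i => g ((Wgate *ᵥ x) i) * (Wval *ᵥ x) i)
      (0 : (n → 𝕜) →L[𝕜] ι → 𝕜) 0 := by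
    rw [show (0 : (n → 𝕜) →L[𝕜] ι → 𝕜) = ContinuousLinearMap.pi fun _ => 0 by ext; simp]
    refine hasFDerivAt_pi.2 fun i => hasFDerivAt_mul_zero_of_eq_zero ?_ (hlin Wval i) ?_ ?_
    · exact (by simpa using hg : DifferentiableAt 𝕜 g ((Wgate *ᵥ 0) i)).comp 0 (hlin Wgate i)
    · simp [hg0]
    · simp
  simpa [gatedMLP] using Wdown.mulVecLin.toContinuousLinearMap.hasFDerivAt.comp 0 hunits

omit [Fintype ι] in
theorem Matrix.eq_zero_of_mulVec_add_eq {M : Matrix m n 𝕜} {f h : (n → 𝕜) → m → 𝕜}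
    (hf : HasFDerivAt f (0 : (n → 𝕜) →L[𝕜] m → 𝕜) 0)
    (hh : HasFDerivAt h (0 : (n → 𝕜) →L[𝕜] m → 𝕜) 0) (heq : ∀ x, M *ᵥ x + f x = h x) :
    M = 0 := by
  have hsum : HasFDerivAt (fun x => M *ᵥ x + f x) M.mulVecLin.toContinuousLinearMap 0 := by
    simpa using M.mulVecLin.toContinuousLinearMap.hasFDerivAt.add hf
  have hM : M.mulVecLin.toContinuousLinearMap = 0 := hsum.unique (by simpa [heq] using hh)
  exact mulVec_injective <| funext fun x => by simpa using DFunLike.congr_fun hM x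

theorem gated_impossibility_general
    (d N : ℕ)
    (g : ℝ → ℝ) (hg0 : g 0 = 0) (hg : DifferentiableAt ℝ g 0)
    (M : Matrix (Fin d) (Fin d) ℝ) (hM : M ≠ 0)
    (Wgate Wval Vgate Vval : Matrix (Fin N) (Fin d) ℝ)
    (Wdown Vdown : Matrix (Fin d) (Fin N) ℝ) :
    ∃ x : Fin d → ℝ,
      M.mulVec x
        + Wdown.mulVec (fun i => g (Wgate.mulVec x i) * Wval.mulVec x i)
      ≠ Vdown.mulVec (fun i => g (Vgate.mulVec x i) * Vval.mulVec x i) := by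
  by_contra! h
  exact hM <| Matrix.eq_zero_of_mulVec_add_eq (hasFDerivAt_gatedMLP_zero hg0 hg Wdown Wgate Wval)
    (hasFDerivAt_gatedMLP_zero hg0 hg Vdown Vgate Vval) h

theorem gated_impossibility
    (d N : ℕ) (hd : 1 ≤ d) (hNd : d ≤ N)
    (g : ℝ → ℝ) (hg0 : g 0 = 0) (hg : DifferentiableAt ℝ g 0)
    (M : Matrix (Fin d) (Fin d) ℝ) (hM : M ≠ 0)
    (Wgate Wval Vgate Vval : Matrix (Fin N) (Fin d) ℝ)
    (Wdown Vdown : Matrix (Fin d) (Fin N) ℝ) :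
    ∃ x : Fin d → ℝ,
      M.mulVec x
        + Wdown.mulVec (fun i => g (Wgate.mulVec x i) * Wval.mulVec x i)
      ≠ Vdown.mulVec (fun i => g (Vgate.mulVec x i) * Vval.mulVec x i) :=
  gated_impossibility_general d N g hg0 hg M hM Wgate Wval Vgate Vval Wdown Vdown
end

section
/- Let S ⊆ {1,…,N}, let Π_S be the diagonal 0-1 matrix with (Π_S)_{ii} = 1 iff i ∈ S, and suppose W_down Π_S W_up = −I_d. Define D = I_N − 2Π_S, V_up = D W_up, V_down = W_down. Then for all x ∈ ℝ^d: W_down ReLU(W_up x) + x = V_down ReLU(V_up x). -/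
theorem relu_absorption_sufficiency
    (d N : ℕ) (hd : 1 ≤ d) (hNd : d ≤ N)
    (Wup : Matrix (Fin N) (Fin d) ℝ) (Wdown : Matrix (Fin d) (Fin N) ℝ)
    (S : Finset (Fin N))
    (hS : Wdown * Matrix.diagonal (fun i => if i ∈ S then (1 : ℝ) else 0) * Wup
            = -1) :
    ∀ x : Fin d → ℝ,
      Wdown.mulVec (fun i => max 0 (Wup.mulVec x i)) + x
        = Wdown.mulVec (fun i =>
            max 0 ((((1 : Matrix (Fin N) (Fin N) ℝ)
              - (2 : ℝ) • Matrix.diagonal (fun i => if i ∈ S then (1 : ℝ) else 0))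
              * Wup).mulVec x i)) := by
  intro x
  set P : Matrix (Fin N) (Fin N) ℝ :=
    Matrix.diagonal (fun i => if i ∈ S then (1 : ℝ) else 0) with hP
  set u : Fin N → ℝ := Wup.mulVec x with hu
  have key : ∀ i, (((1 : Matrix (Fin N) (Fin N) ℝ) - (2 : ℝ) • P) * Wup).mulVec x i
      = if i ∈ S then -u i else u i := by
    intro i
    have : (((1 : Matrix (Fin N) (Fin N) ℝ) - (2 : ℝ) • P) * Wup).mulVec x
        = u - (2 : ℝ) • P.mulVec u := by
      rw [Matrix.sub_mul, Matrix.sub_mulVec, Matrix.one_mul, Matrix.smul_mul,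
        Matrix.smul_mulVec, Matrix.mulVec_mulVec, hu]
    rw [this]
    simp only [Pi.sub_apply, Pi.smul_apply, hP, Matrix.mulVec_diagonal, smul_eq_mul]
    by_cases h : i ∈ S <;> simp [h] <;> ring
  have hmax : ∀ i, max 0 ((((1 : Matrix (Fin N) (Fin N) ℝ) - (2 : ℝ) • P) * Wup).mulVec x i)
      = max 0 (u i) - (if i ∈ S then (1 : ℝ) else 0) * u i := by
    intro i
    rw [key i]
    by_cases h : i ∈ S <;> simp [h, max_comm]
    rcases le_total (u i) 0 with h' | h' <;> simp [max_eq_left, max_eq_right, h'] <;> linarith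
  have hfun : (fun i => max 0 ((((1 : Matrix (Fin N) (Fin N) ℝ) - (2 : ℝ) • P) * Wup).mulVec x i))
      = fun i => max 0 (u i) - (if i ∈ S then (1 : ℝ) else 0) * u i := funext hmax
  rw [hfun]
  funext j
  simp only [Matrix.mulVec, dotProduct, Pi.add_apply, mul_sub,
    Finset.sum_sub_distrib]
  have h2 : ∑ i, Wdown j i * ((if i ∈ S then (1 : ℝ) else 0) * u i)
      = (Wdown * P * Wup).mulVec x j := by
    simp [Matrix.mulVec, dotProduct, Matrix.mul_apply, hP, Matrix.diagonal,
      Finset.mul_sum, Finset.sum_mul, hu]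
    rw [Finset.sum_comm]
    congr 1; funext i
    exact Finset.sum_congr rfl fun k _ => by ring
  rw [h2, hS]
  simp [Matrix.neg_mulVec]
end

section
/- Let S ⊆ {1,…,N} with W_down Π_S W_up = −I_d, D = I_N − 2Π_S, V_up = D W_up, V_down = W_down. Then for all x ∈ ℝ^d: W_down GELU(W_up x) + x = V_down GELU(V_up x), where GELU(z) = z·Φ(z) with Φ the standard normal CDF. -/
/-- The standard normal CDF. -/
noncomputable def stdNormalCDF (z : ℝ) : ℝ :=
  (Real.sqrt (2 * Real.pi))⁻¹ * ∫ t in Set.Iic z, Real.exp (-t ^ 2 / 2)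

/-- GELU activation. -/
noncomputable def gelu (z : ℝ) : ℝ := z * stdNormalCDF z

lemma integrable_gauss : MeasureTheory.Integrable (fun t : ℝ => Real.exp (-t ^ 2 / 2)) := by
  have := integrable_exp_neg_mul_sq (b := (1/2 : ℝ)) (by norm_num)
  convert this using 2 with t
  ring_nf

lemma stdNormalCDF_neg (z : ℝ) : stdNormalCDF (-z) = 1 - stdNormalCDF z := by
  have h1 : (∫ t in Set.Iic (-z), Real.exp (-t ^ 2 / 2))
      = ∫ t in Set.Ioi z, Real.exp (-t ^ 2 / 2) := by
    have := integral_comp_neg_Iic (-z) (fun t : ℝ => Real.exp (-t ^ 2 / 2))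
    simp only [neg_neg] at this
    rw [← this]
    congr 1 with t
    ring_nf
  have h2 : (∫ t in Set.Iic z, Real.exp (-t ^ 2 / 2))
      + (∫ t in Set.Ioi z, Real.exp (-t ^ 2 / 2))
      = ∫ t : ℝ, Real.exp (-t ^ 2 / 2) := by
    rw [← MeasureTheory.integral_add_compl (measurableSet_Iic (a := z)) integrable_gauss]
    simp
  have h3 : (∫ t : ℝ, Real.exp (-t ^ 2 / 2)) = Real.sqrt (2 * Real.pi) := by
    have := integral_gaussian (1/2 : ℝ)
    rw [show Real.pi / (1/2) = 2 * Real.pi by ring] at this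
    rw [← this]
    congr 1 with t
    ring_nf
  have hpos : (0 : ℝ) < Real.sqrt (2 * Real.pi) :=
    Real.sqrt_pos.2 (by positivity)
  have h4 : (∫ t in Set.Ioi z, Real.exp (-t ^ 2 / 2))
      = Real.sqrt (2 * Real.pi) - ∫ t in Set.Iic z, Real.exp (-t ^ 2 / 2) := by
    linarith [h2, h3]
  unfold stdNormalCDF
  rw [h1, h4, mul_sub, inv_mul_cancel₀ hpos.ne']

lemma gelu_neg (z : ℝ) : gelu (-z) = gelu z - z := by
  unfold gelu
  rw [stdNormalCDF_neg]
  ring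

theorem gelu_absorption_sufficiency
    (d N : ℕ) (hd : 1 ≤ d) (hNd : d ≤ N)
    (Wup : Matrix (Fin N) (Fin d) ℝ) (Wdown : Matrix (Fin d) (Fin N) ℝ)
    (S : Finset (Fin N))
    (hS : Wdown * Matrix.diagonal (fun i => if i ∈ S then (1 : ℝ) else 0) * Wup
            = -1) :
    ∀ x : Fin d → ℝ,
      Wdown.mulVec (fun i => gelu (Wup.mulVec x i)) + x
        = Wdown.mulVec (fun i =>
            gelu ((((1 : Matrix (Fin N) (Fin N) ℝ)
              - (2 : ℝ) • Matrix.diagonal (fun i => if i ∈ S then (1 : ℝ) else 0))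
              * Wup).mulVec x i)) := by
  intro x
  set P : Matrix (Fin N) (Fin N) ℝ :=
    Matrix.diagonal (fun i => if i ∈ S then (1 : ℝ) else 0) with hP
  set f : Fin N → ℝ := Wup.mulVec x with hf
  have key : (fun i =>
        gelu ((((1 : Matrix (Fin N) (Fin N) ℝ) - (2 : ℝ) • P) * Wup).mulVec x i))
      = (fun i => gelu (f i)) - P.mulVec f := by
    funext i
    have hm : (((1 : Matrix (Fin N) (Fin N) ℝ) - (2 : ℝ) • P) * Wup).mulVec x i
        = f i - 2 * ((if i ∈ S then (1:ℝ) else 0) * f i) := by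
      rw [← Matrix.mulVec_mulVec]
      simp [Matrix.sub_mulVec, Matrix.smul_mulVec, hP, Matrix.mulVec_diagonal, ← hf,
        mul_comm]
    rw [hm]
    by_cases hi : i ∈ S
    · simp only [hi, if_true, Pi.sub_apply, hP, Matrix.mulVec_diagonal]
      rw [show f i - 2 * (1 * f i) = -(f i) by ring, gelu_neg]
      simp
    · simp [hi, hP, Matrix.mulVec_diagonal]
  have hkey2 : Wdown.mulVec (P.mulVec f) = -x := by
    rw [hf, Matrix.mulVec_mulVec, Matrix.mulVec_mulVec, hS,
      show (-1 : Matrix (Fin d) (Fin d) ℝ) = -(1) from rfl, Matrix.neg_mulVec,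
      Matrix.one_mulVec]
  rw [key, Matrix.mulVec_sub, hkey2]
  abel
end

section
/- Suppose W_down ReLU(W_up x) + x = V_down ReLU(V_up x) for all x ∈ ℝ^d. Then the odd and even parts separate: V_down V_up = W_down W_up + 2I_d, and V_down |V_up x| = W_down |W_up x| for all x ∈ ℝ^d. -/
/-!
Since `ReLU z - ReLU (-z) = z` and `ReLU z + ReLU (-z) = |z|`, evaluating the identity at `x`
and at `-x` and then subtracting, resp. adding, isolates its odd part
`V_down V_up x = W_down W_up x + 2x` and its even part `V_down |V_up x| = W_down |W_up x|`.
-/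

open Matrix

def reluBlock {R m n : Type*} [Ring R] [Lattice R] [Fintype m] [Fintype n]
    (down : Matrix m n R) (up : Matrix n m R) (x : m → R) : m → R :=
  down *ᵥ (up *ᵥ x)⁺

lemma Pi.posPart_eq_max_zero {R n : Type*} [AddGroup R] [LinearOrder R] (v : n → R) :
    v⁺ = fun i => max 0 (v i) :=
  funext fun _ => max_comm _ _

section
variable {R m n : Type*} [Ring R] [Lattice R] [IsOrderedAddMonoid R] [Fintype m] [Fintype n]
  (down : Matrix m n R) (up : Matrix n m R) (x : m → R)

lemma reluBlock_add_reluBlock_neg :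
    reluBlock down up x + reluBlock down up (-x) = down *ᵥ |up *ᵥ x| := by
  rw [reluBlock, reluBlock, mulVec_neg, posPart_neg, ← mulVec_add, posPart_add_negPart]

lemma reluBlock_sub_reluBlock_neg :
    reluBlock down up x - reluBlock down up (-x) = (down * up) *ᵥ x := by
  rw [reluBlock, reluBlock, mulVec_neg, posPart_neg, ← mulVec_sub, posPart_sub_negPart,
    mulVec_mulVec]

end

theorem relu_absorption_parity_separation
    (d N : ℕ)
    (Wup Vup : Matrix (Fin N) (Fin d) ℝ)
    (Wdown Vdown : Matrix (Fin d) (Fin N) ℝ)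
    (habs : ∀ x : Fin d → ℝ,
      Wdown.mulVec (fun i => max 0 (Wup.mulVec x i)) + x
        = Vdown.mulVec (fun i => max 0 (Vup.mulVec x i))) :
    Vdown * Vup = Wdown * Wup + (2 : ℝ) • (1 : Matrix (Fin d) (Fin d) ℝ) ∧
    ∀ x : Fin d → ℝ,
      Vdown.mulVec (fun i => |Vup.mulVec x i|)
        = Wdown.mulVec (fun i => |Wup.mulVec x i|) := by
  have h : ∀ x, reluBlock Wdown Wup x + x = reluBlock Vdown Vup x := fun x => by
    simpa only [reluBlock, Pi.posPart_eq_max_zero] using habs x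
  refine ⟨ext_iff_mulVec.2 fun x => ?_, fun x => ?_⟩
  · rw [add_mulVec, smul_mulVec, one_mulVec, ← reluBlock_sub_reluBlock_neg Vdown Vup,
      ← reluBlock_sub_reluBlock_neg Wdown Wup, ← h, ← h]
    module
  · change Vdown *ᵥ |Vup *ᵥ x| = Wdown *ᵥ |Wup *ᵥ x|
    rw [← reluBlock_add_reluBlock_neg, ← reluBlock_add_reluBlock_neg, ← h, ← h]
    abel
end

section
/- Let ψ : ℝ → ℝ be analytic (given by an everywhere-convergent power series) and not a polynomial, and let α_1, …, α_m > 0 be pairwise distinct. If there exist c_1, …, c_m ∈ ℝ and a polynomial p with Σ_{k=1}^m c_k ψ(α_k t) = p(t) for all t ∈ ℝ, then c_k = 0 for all k. -/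
open Filter

/-- If a power series converges to `0` at every real point, all its coefficients vanish. -/
lemma coeffs_eq_zero_of_hasSum_zero (b : ℕ → ℝ)
    (hb : ∀ t : ℝ, HasSum (fun n => b n * t ^ n) 0) : ∀ n, b n = 0 := by
  set q : FormalMultilinearSeries ℝ ℝ ℝ := FormalMultilinearSeries.ofScalars ℝ b with hq
  have hrad : q.radius = ⊤ := by
    apply q.radius_eq_top_of_summable_norm
    intro r
    have hs : Summable fun n => b n * (r : ℝ) ^ n := (hb r).summable
    have hs' : Summable fun n => |b n * (r : ℝ) ^ n| := hs.abs
    refine hs'.congr fun n => ?_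
    rw [hq, FormalMultilinearSeries.ofScalars_norm, abs_mul, abs_pow,
      abs_of_nonneg r.coe_nonneg, Real.norm_eq_abs]
  have hball : HasFPowerSeriesOnBall (0 : ℝ → ℝ) q 0 ⊤ := by
    refine ⟨by rw [hrad], ENNReal.zero_lt_top, fun {y} _ => ?_⟩
    have := hb y
    simp only [Pi.zero_apply]
    refine HasSum.congr_fun (hb y) fun n => ?_
    rw [hq, FormalMultilinearSeries.ofScalars_apply_eq, smul_eq_mul]
  have hz : q = 0 := hball.hasFPowerSeriesAt.eq_zero
  intro n
  have := FormalMultilinearSeries.ofScalars_series_eq_zero (𝕜 := ℝ) ℝ |>.mp hz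
  exact congrFun this n

theorem scaled_analytic_independence
    (ψ : ℝ → ℝ) (a : ℕ → ℝ)
    (hψ : ∀ t : ℝ, HasSum (fun n => a n * t ^ n) (ψ t))
    (hnotpoly : ¬ ∃ p : Polynomial ℝ, ∀ t : ℝ, ψ t = p.eval t)
    (m : ℕ) (α : Fin m → ℝ) (hα : ∀ k, 0 < α k) (hαinj : Function.Injective α)
    (c : Fin m → ℝ) (p : Polynomial ℝ)
    (h : ∀ t : ℝ, ∑ k, c k * ψ (α k * t) = p.eval t) :
    ∀ k, c k = 0 := by
  -- Step 1: infinitely many nonzero coefficients of ψ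
  have hainf : {n : ℕ | a n ≠ 0}.Infinite := by
    by_contra hfin
    rw [Set.not_infinite] at hfin
    apply hnotpoly
    refine ⟨∑ n ∈ hfin.toFinset, Polynomial.C (a n) * Polynomial.X ^ n, fun t => ?_⟩
    have h1 : HasSum (fun n => a n * t ^ n) (∑ n ∈ hfin.toFinset, a n * t ^ n) := by
      apply hasSum_sum_of_ne_finset_zero
      intro n hn
      simp only [Set.Finite.mem_toFinset, Set.mem_setOf_eq, not_not] at hn
      simp [hn]
    rw [(hψ t).unique h1]
    simp [Polynomial.eval_finset_sum]
  -- Step 2: coefficient identity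
  have key : ∀ n, (∑ k, c k * α k ^ n) * a n = p.coeff n := by
    have hb : ∀ t : ℝ, HasSum
        (fun n => ((∑ k, c k * α k ^ n) * a n - p.coeff n) * t ^ n) 0 := by
      intro t
      have h1 : HasSum (fun n => (∑ k, c k * α k ^ n) * a n * t ^ n)
          (∑ k, c k * ψ (α k * t)) := by
        have := hasSum_sum (s := Finset.univ)
          (f := fun k n => c k * (a n * (α k * t) ^ n))
          (a := fun k => c k * ψ (α k * t))
          (fun k _ => (hψ (α k * t)).mul_left (c k))
        refine this.congr_fun fun n => ?_
        rw [Finset.sum_mul, Finset.sum_mul]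
        refine Finset.sum_congr rfl fun k _ => ?_
        show c k * α k ^ n * a n * t ^ n = c k * (a n * (α k * t) ^ n)
        rw [mul_pow]; ring
      have h2 : HasSum (fun n => p.coeff n * t ^ n) (p.eval t) := by
        have h3 : HasSum (fun n => p.coeff n * t ^ n)
            (∑ n ∈ Finset.range (p.natDegree + 1), p.coeff n * t ^ n) := by
          apply hasSum_sum_of_ne_finset_zero
          intro n hn
          rw [Finset.mem_range, not_lt] at hn
          rw [p.coeff_eq_zero_of_natDegree_lt (by omega), zero_mul]
        rwa [← Polynomial.eval_eq_sum_range] at h3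
      have := (h1.sub h2)
      rw [h t, sub_self] at this
      refine this.congr_fun fun n => ?_
      ring
    intro n
    have := coeffs_eq_zero_of_hasSum_zero _ hb n
    linarith
  -- Step 3: infinitely many n with ∑ c k α k ^ n = 0
  have hS : {n : ℕ | a n ≠ 0 ∧ p.natDegree < n}.Infinite := by
    have : {n : ℕ | a n ≠ 0} \ {n : ℕ | n ≤ p.natDegree} ⊆
        {n : ℕ | a n ≠ 0 ∧ p.natDegree < n} := by
      intro n hn
      exact ⟨hn.1, by simpa using hn.2⟩
    exact Set.Infinite.mono this (hainf.diff (Set.finite_le_nat _))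
  have hvan : ∀ n ∈ {n : ℕ | a n ≠ 0 ∧ p.natDegree < n}, (∑ k, c k * α k ^ n) = 0 := by
    intro n hn
    have h0 := key n
    rw [p.coeff_eq_zero_of_natDegree_lt hn.2] at h0
    exact (mul_eq_zero.mp h0).resolve_right hn.1
  -- Step 4: Vandermonde-type argument via asymptotics
  by_contra hc
  push_neg at hc
  obtain ⟨k₁, hk₁⟩ := hc
  have hT : (Finset.univ.filter fun k => c k ≠ 0).Nonempty :=
    ⟨k₁, by simp [hk₁]⟩
  obtain ⟨k₀, hk₀T, hk₀max⟩ := Finset.exists_max_image _ α hT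
  have hck₀ : c k₀ ≠ 0 := (Finset.mem_filter.mp hk₀T).2
  set f : ℕ → ℝ := fun n => ∑ k, c k * (α k / α k₀) ^ n with hf
  have htend : Tendsto f atTop (nhds (c k₀)) := by
    have : Tendsto f atTop (nhds (∑ k, if k = k₀ then c k₀ else 0)) := by
      apply tendsto_finset_sum
      intro k _
      by_cases hk : k = k₀
      · subst hk
        simp only [if_pos rfl, div_self (hα k).ne', one_pow, mul_one]
        exact tendsto_const_nhds
      · simp only [if_neg hk]
        by_cases hck : c k = 0
        · simp [hck]
        · have hkT : k ∈ Finset.univ.filter fun k => c k ≠ 0 := by simp [hck]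
          have hlt : α k < α k₀ :=
            lt_of_le_of_ne (hk₀max k hkT) (fun he => hk (hαinj he))
          have hratio : |α k / α k₀| < 1 := by
            rw [abs_of_pos (div_pos (hα k) (hα k₀))]
            exact (div_lt_one (hα k₀)).mpr hlt
          have := tendsto_pow_atTop_nhds_zero_of_abs_lt_one hratio
          simpa using this.const_mul (c k)
    simpa [Finset.sum_ite_eq' Finset.univ k₀ (fun _ => c k₀)] using this
  have hfreq : ∃ᶠ n in atTop, f n = 0 := by
    rw [Nat.frequently_atTop_iff_infinite]
    apply hS.mono
    intro n hn
    have h0 := hvan n hn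
    simp only [Set.mem_setOf_eq, hf]
    have : ∑ k, c k * (α k / α k₀) ^ n = (∑ k, c k * α k ^ n) / α k₀ ^ n := by
      rw [Finset.sum_div]
      refine Finset.sum_congr rfl fun k _ => ?_
      rw [div_pow]; ring
    rw [this, h0, zero_div]
  have : c k₀ = 0 :=
    tendsto_nhds_unique_of_frequently_eq htend tendsto_const_nhds hfreq
  exact hck₀ this
end

section
/- Let α_1 < α_2 < ⋯ < α_m be distinct positive reals and n_1 < n_2 < ⋯ < n_m distinct natural numbers. Then the m×m generalized Vandermonde matrix with entries A_{jk} = α_k^{n_j} is invertible. -/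
/-!
A vector `c` in the left kernel of the matrix gives the polynomial `∑ c_j X^{n_j}` vanishing at
the `m` distinct positive points `α_k`. A nonzero polynomial with at most `m` nonzero coefficients
has at most `m - 1` sign changes among them, so by Descartes' rule of signs it has fewer than `m`
positive roots; hence `c = 0`.
-/

open Finset Polynomial Function

namespace Polynomial

variable {R : Type*}

theorem signVariations_lt_card_support [Semiring R] [LinearOrder R] {P : R[X]} (hP : P ≠ 0) :
    signVariations P < #P.support := by
  induction hk : #P.support using Nat.strong_induction_on generalizing P with
  | _ k ih =>
  have hpos : 0 < k := hk ▸ card_pos.mpr (support_nonempty.mpr hP)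
  rcases le_or_gt k 1 with hle | hlt
  · obtain ⟨d, a, rfl⟩ := card_support_le_one_iff_monomial.mp (hk ▸ hle)
    simpa [signVariations_monomial] using hpos
  · have hE : #P.eraseLead.support = k - 1 := by rw [card_support_eraseLead, hk]
    have hE0 : P.eraseLead ≠ 0 := by
      rw [← support_nonempty, ← card_pos, hE]; omega
    have := ih _ (by omega) hE0 hE
    have := signVariations_le_eraseLead_succ P
    omega

theorem roots_countP_pos_lt_card_support [CommRing R] [LinearOrder R] [IsStrictOrderedRing R]
    {P : R[X]} (hP : P ≠ 0) : P.roots.countP (0 < ·) < #P.support :=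
  (roots_countP_pos_le_signVariations P).trans_lt (signVariations_lt_card_support hP)

end Polynomial

theorem eq_zero_of_forall_sum_mul_pow_eq_zero {R ι : Type*} [CommRing R] [LinearOrder R]
    [IsStrictOrderedRing R] [Fintype ι] {c : ι → R} {n : ι → ℕ} (hn : Injective n)
    {α : ι → R} (hα : Injective α) (hαpos : ∀ k, 0 < α k)
    (h : ∀ k, ∑ j, c j * α k ^ n j = 0) : c = 0 := by
  classical
  by_contra hc
  set P : R[X] := ∑ j, monomial (n j) (c j)
  have hcoeff (j : ι) : P.coeff (n j) = c j := by
    simp [P, coeff_monomial, hn.eq_iff]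
  have hP : P ≠ 0 := by
    obtain ⟨j, hj⟩ := Function.ne_iff.mp hc
    exact fun h0 => hj (by rw [← hcoeff, h0, coeff_zero]; rfl)
  have hsupport : #P.support ≤ Fintype.card ι := by
    calc #P.support ≤ #(univ.image n) := card_le_card fun d hd => by
          by_contra hd'
          simp only [mem_image, mem_univ, true_and, not_exists] at hd'
          simp [P, coeff_monomial, hd'] at hd
      _ ≤ Fintype.card ι := card_image_le
  have hroots : Fintype.card ι ≤ P.roots.countP (0 < ·) := by
    have hsub : (univ.image α).val ≤ P.roots := by
      refine (Multiset.le_iff_subset (univ.image α).nodup).mpr fun x hx => ?_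
      obtain ⟨k, -, rfl⟩ := mem_image.mp hx
      simpa [mem_roots hP, P, eval_finsetSum] using h k
    calc Fintype.card ι = (univ.image α).val.countP (0 < ·) := by
          rw [Multiset.countP_eq_card.mpr (by simpa using hαpos), ← card_def,
            card_image_of_injective _ hα, card_univ]
      _ ≤ P.roots.countP (0 < ·) := Multiset.countP_le_of_le _ hsub
  exact (hroots.trans_lt (roots_countP_pos_lt_card_support hP)).not_ge hsupport

theorem generalized_vandermonde_invertible
    (m : ℕ) (α : Fin m → ℝ) (hαpos : ∀ k, 0 < α k) (hα : StrictMono α)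
    (n : Fin m → ℕ) (hn : StrictMono n) :
    IsUnit (Matrix.of fun j k : Fin m => α k ^ n j).det := by
  rw [isUnit_iff_ne_zero]
  intro hdet
  obtain ⟨c, hc, hvecMul⟩ := Matrix.exists_vecMul_eq_zero_iff.mpr hdet
  refine hc (eq_zero_of_forall_sum_mul_pow_eq_zero hn.injective hα.injective hαpos fun k => ?_)
  simpa [Matrix.vecMul, dotProduct] using congrFun hvecMul k
end

section
/- Let d ≥ 2 and suppose w_1, …, w_N ∈ ℝ^d are non-zero and pairwise non-collinear. If a linear combination Σ_{i=1}^N λ_i |w_i^⊤ x| is a linear function of x on ℝ^d (i.e., equals a^⊤x for some a ∈ ℝ^d for all x), then λ_i = 0 for all i. -/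
/-!
Since the left-hand side is even in `x` and the right-hand side is odd, the combination
`φ x = ∑ i, λ i * |w i ⬝ x|` vanishes identically. To see `λ i = 0`, pick `x₀` on the hyperplane
`w i ⬝ x = 0` but off every other hyperplane `w j ⬝ x = 0` (these meet it in proper subspaces, by
non-collinearity), and a direction `v` with `w i ⬝ v ≠ 0`. For small `t` every term `j ≠ i` of
`t ↦ φ (x₀ + t v)` is affine in `t`, while the `i`-th term is `λ i * |t| * |w i ⬝ v|`; hence
`0 = φ (x₀ + t v) + φ (x₀ - t v) - 2 φ x₀ = 2 λ i |t| |w i ⬝ v|`.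
-/

open Filter Topology

lemma abs_add_add_abs_sub_of_abs_le {c u : ℝ} (h : |u| ≤ |c|) :
    |c + u| + |c - u| = 2 * |c| := by
  rcases abs_le.mp h with ⟨h₁, h₂⟩
  rcases le_total 0 c with hc | hc
  · rw [abs_of_nonneg hc] at h₁ h₂ ⊢
    rw [abs_of_nonneg (by linarith), abs_of_nonneg (by linarith)]
    ring
  · rw [abs_of_nonpos hc] at h₁ h₂ ⊢
    rw [abs_of_nonpos (by linarith), abs_of_nonpos (by linarith)]
    ring

lemma exists_forall_abs_mul_le {ι : Type*} [Finite ι] {b c : ι → ℝ} (hc : ∀ j, c j ≠ 0) :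
    ∃ t ≠ 0, ∀ j, |t * b j| ≤ |c j| := by
  have hsmall : ∀ᶠ t in 𝓝 (0 : ℝ), ∀ j, |t * b j| ≤ |c j| := by
    refine eventually_all.mpr fun j => ?_
    have hcont : Continuous fun t : ℝ => |t * b j| := by fun_prop
    refine (hcont.tendsto' 0 0 (by simp)).eventually (ge_mem_nhds ?_)
    exact abs_pos.mpr (hc j)
  have hne : ∀ᶠ t in 𝓝[≠] (0 : ℝ), t ≠ 0 := self_mem_nhdsWithin
  exact (hne.and (eventually_nhdsWithin_of_eventually_nhds hsmall)).exists

lemma eq_zero_of_forall_sum_mul_abs_eq_zero {ι : Type*} [Fintype ι] [DecidableEq ι]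
    {lam b c : ι → ℝ} {i : ι} (hci : c i = 0) (hbi : b i ≠ 0) (hc : ∀ j, j ≠ i → c j ≠ 0)
    (h : ∀ t, ∑ j, lam j * |c j + t * b j| = 0) : lam i = 0 := by
  obtain ⟨t, ht, hsmall⟩ := exists_forall_abs_mul_le (b := fun j : {j // j ≠ i} => b j)
    (fun j => hc j j.2)
  have hsum : ∑ j, lam j * (|c j + t * b j| + |c j - t * b j| - 2 * |c j|) = 0 := by
    have hneg := h (-t)
    have hzero := h 0
    simp only [neg_mul, ← sub_eq_add_neg] at hneg
    simp only [zero_mul, add_zero] at hzero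
    simp only [mul_sub, mul_add, Finset.sum_sub_distrib, Finset.sum_add_distrib,
      mul_left_comm _ (2 : ℝ), ← Finset.mul_sum, h t, hneg, hzero]
    ring
  rw [Finset.sum_eq_single i (fun j _ hj => by
      rw [abs_add_add_abs_sub_of_abs_le (hsmall ⟨j, hj⟩), sub_self, mul_zero]) (by simp)] at hsum
  rw [hci, zero_add, zero_sub, abs_neg, abs_zero] at hsum
  simpa [ht, hbi] using hsum

lemma Module.Dual.exists_eq_zero_forall_ne_zero {ι K E : Type*} [Finite ι] [Field K] [Infinite K]
    [AddCommGroup E] [Module K E] {f₀ : Module.Dual K E} {f : ι → Module.Dual K E} (hf₀ : f₀ ≠ 0)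
    (hf : ∀ j (t : K), f j ≠ t • f₀) :
    ∃ x, f₀ x = 0 ∧ ∀ j, f j x ≠ 0 := by
  obtain ⟨v, hv⟩ : ∃ v, f₀ v = 1 := by
    obtain ⟨u, hu⟩ := DFunLike.ne_iff.mp hf₀
    exact ⟨(f₀ u)⁻¹ • u, by simpa using inv_mul_cancel₀ (by simpa using hu)⟩
  -- `x ↦ x - f₀ x • v` projects onto `ker f₀`, and `f j` composed with it is `f j - f j v • f₀`.
  obtain ⟨y, hy⟩ := Module.Dual.exists_forall_ne_zero_of_forall_exists
    (fun j => f j - f j v • f₀) fun j => DFunLike.ne_iff.mp (sub_ne_zero.mpr (hf j _))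
  refine ⟨y - f₀ y • v, by simp [hv], fun j => ?_⟩
  convert hy j using 1
  simp [mul_comm]

theorem Module.Dual.eq_zero_of_forall_sum_mul_abs_eq {ι E : Type*} [Fintype ι]
    [AddCommGroup E] [Module ℝ E] {f : ι → Module.Dual ℝ E} (hf : ∀ i, f i ≠ 0)
    (hnc : ∀ i j, i ≠ j → ∀ t : ℝ, f i ≠ t • f j) {lam : ι → ℝ} {g : Module.Dual ℝ E}
    (h : ∀ x, ∑ i, lam i * |f i x| = g x) (i : ι) : lam i = 0 := by
  classical
  have hzero : ∀ x, ∑ i, lam i * |f i x| = 0 := fun x => by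
    have hneg := h (-x)
    simp only [map_neg, abs_neg] at hneg
    linarith [h x]
  obtain ⟨x₀, hx₀, hne⟩ := Module.Dual.exists_eq_zero_forall_ne_zero
    (f := fun j : {j // j ≠ i} => f j) (hf i) fun j => hnc j i j.2
  obtain ⟨v, hv⟩ := DFunLike.ne_iff.mp (hf i)
  refine eq_zero_of_forall_sum_mul_abs_eq_zero (c := fun j => f j x₀) (b := fun j => f j v) hx₀ hv
    (fun j hj => hne ⟨j, hj⟩) fun t => ?_
  simpa using hzero (x₀ + t • v)

theorem abs_ridge_independence_general
    (d N : ℕ)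
    (w : Fin N → (Fin d → ℝ)) (hw : ∀ i, w i ≠ 0)
    (hnc : ∀ i j, i ≠ j → ∀ t : ℝ, w i ≠ t • w j)
    (lam : Fin N → ℝ) (a : Fin d → ℝ)
    (h : ∀ x : Fin d → ℝ,
      ∑ i, lam i * |∑ j, w i j * x j| = ∑ j, a j * x j) :
    ∀ i, lam i = 0 := by
  let D := dotProductEquiv ℝ (Fin d)
  refine Module.Dual.eq_zero_of_forall_sum_mul_abs_eq (f := fun i => D (w i)) (g := D a)
    (fun i => D.map_ne_zero_iff.mpr (hw i)) (fun i j hij t hD => hnc i j hij t ?_) h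
  exact D.injective (by simpa using hD)

theorem abs_ridge_independence
    (d N : ℕ) (hd : 2 ≤ d)
    (w : Fin N → (Fin d → ℝ)) (hw : ∀ i, w i ≠ 0)
    (hnc : ∀ i j, i ≠ j → ∀ t : ℝ, w i ≠ t • w j)
    (lam : Fin N → ℝ) (a : Fin d → ℝ)
    (h : ∀ x : Fin d → ℝ,
      ∑ i, lam i * |∑ j, w i j * x j| = ∑ j, a j * x j) :
    ∀ i, lam i = 0 :=
  abs_ridge_independence_general d N w hw hnc lam a h
end

section
/- Suppose Z, Z' ∈ ℝ^{d×d} with Z − Z' invertible, and suppose W_down σ(W_up x) + Z x = W_down' σ(W_up' x) + Z' x for all x ∈ ℝ^d, where σ is ReLU. If additionally (W_up (Z−Z')^{-1}) has pairwise non-collinear non-zero rows and W_down has non-zero columns, then there exists S ⊆ {1,…,N} with |S| ≥ d such that W_down Π_S W_up = (Z' − Z). -/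
open Matrix Finset


lemma mulVec_eq_sum_cols {d N : ℕ} (M : Matrix (Fin d) (Fin N) ℝ) (u : Fin N → ℝ) :
    M.mulVec u = ∑ j, u j • (fun k => M k j) := by
  funext k
  simp [Matrix.mulVec, dotProduct, Finset.sum_apply, mul_comm]

lemma relu_add_relu_neg (a : ℝ) : max 0 a + max 0 (-a) = |a| := by
  rcases le_total 0 a with h | h
  · rw [max_eq_right h, max_eq_left (by linarith), abs_of_nonneg h]; ring
  · rw [max_eq_left h, max_eq_right (by linarith), abs_of_nonpos h]; ring

lemma relu_neg_eq (a : ℝ) : max 0 (-a) = max 0 a - a := by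
  rcases le_total 0 a with h | h
  · rw [max_eq_left (by linarith), max_eq_right h]; ring
  · rw [max_eq_right (by linarith), max_eq_left h]; ring

lemma abs_add_abs_sub_of_le {a b : ℝ} (h : |b| ≤ |a|) : |a + b| + |a - b| = 2 * |a| := by
  rcases le_total 0 a with ha | ha
  · rw [abs_of_nonneg ha] at h
    have h1 := abs_le.mp h
    rw [abs_of_nonneg (by linarith : (0:ℝ) ≤ a + b), abs_of_nonneg (by linarith : (0:ℝ) ≤ a - b),
      abs_of_nonneg ha]; ring
  · rw [abs_of_nonpos ha] at h
    have h1 := abs_le.mp h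
    rw [abs_of_nonpos (by linarith : a + b ≤ 0), abs_of_nonpos (by linarith : a - b ≤ 0),
      abs_of_nonpos ha]; ring

-- single functional version
lemma exists_perp_ne_zero {d : ℕ} {v φ : Fin d → ℝ} (hv : v ≠ 0)
    (hφ : ¬ ∃ t : ℝ, φ = t • v) :
    ∃ x : Fin d → ℝ, v ⬝ᵥ x = 0 ∧ φ ⬝ᵥ x ≠ 0 := by
  have hvv : v ⬝ᵥ v ≠ 0 := fun h => hv (dotProduct_self_eq_zero.mp h)
  set cc : ℝ := (v ⬝ᵥ φ) / (v ⬝ᵥ v) with hcc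
  refine ⟨φ - cc • v, ?_, ?_⟩
  · rw [dotProduct_sub, dotProduct_smul, smul_eq_mul, hcc, div_mul_cancel₀ _ hvv, sub_self]
  · intro h
    have hx : (φ - cc • v) ⬝ᵥ (φ - cc • v) = 0 := by
      rw [sub_dotProduct, smul_dotProduct, h, smul_eq_mul]
      have : v ⬝ᵥ (φ - cc • v) = 0 := by
        rw [dotProduct_sub, dotProduct_smul, smul_eq_mul, hcc, div_mul_cancel₀ _ hvv, sub_self]
      rw [this, mul_zero, sub_zero]
    have := dotProduct_self_eq_zero.mp hx
    exact hφ ⟨cc, by rwa [sub_eq_zero] at this⟩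

lemma exists_generic {d : ℕ} {ι : Type*} (s : Finset ι) (v : Fin d → ℝ) (hv : v ≠ 0)
    (u : ι → Fin d → ℝ) (hu : ∀ j ∈ s, ¬ ∃ t : ℝ, u j = t • v) :
    ∃ x : Fin d → ℝ, v ⬝ᵥ x = 0 ∧ ∀ j ∈ s, u j ⬝ᵥ x ≠ 0 := by
  classical
  induction s using Finset.induction_on with
  | empty => exact ⟨0, by simp, by simp⟩
  | @insert j₀ s hj₀ ih =>
    obtain ⟨x, hx0, hx⟩ := ih (fun j hj => hu j (Finset.mem_insert_of_mem hj))
    obtain ⟨y, hy0, hy⟩ := exists_perp_ne_zero hv (hu j₀ (Finset.mem_insert_self _ _))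
    set T : Finset ℝ :=
      insert (-(u j₀ ⬝ᵥ x) / (u j₀ ⬝ᵥ y)) (s.image fun j => -(u j ⬝ᵥ x) / (u j ⬝ᵥ y)) with hT
    obtain ⟨t, ht⟩ := Infinite.exists_notMem_finset T
    refine ⟨x + t • y, ?_, ?_⟩
    · rw [dotProduct_add, dotProduct_smul, hx0, hy0, smul_zero, add_zero]
    · intro j hj
      rw [dotProduct_add, dotProduct_smul, smul_eq_mul]
      rcases Finset.mem_insert.mp hj with rfl | hjs
      · intro h
        apply ht
        have : t = -(u j ⬝ᵥ x) / (u j ⬝ᵥ y) := by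
          field_simp
          linarith
        rw [this, hT]
        exact Finset.mem_insert_self _ _
      · rcases eq_or_ne (u j ⬝ᵥ y) 0 with hzy | hzy
        · rw [hzy, mul_zero, add_zero]
          exact hx j hjs
        · intro h
          apply ht
          have : t = -(u j ⬝ᵥ x) / (u j ⬝ᵥ y) := by
            field_simp
            linarith
          rw [this, hT]
          exact Finset.mem_insert_of_mem (Finset.mem_image_of_mem _ hjs)

lemma class_separation {d : ℕ} {ι : Type*} [Fintype ι]
    (u : ι → Fin d → ℝ) (c : ι → Fin d → ℝ)
    (h : ∀ x : Fin d → ℝ, ∑ j, |u j ⬝ᵥ x| • c j = 0)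
    (v : Fin d → ℝ) (hv : v ≠ 0) (x : Fin d → ℝ)
    [DecidablePred fun j => ∃ t : ℝ, u j = t • v] :
    ∑ j ∈ Finset.univ.filter (fun j => ∃ t : ℝ, u j = t • v), |u j ⬝ᵥ x| • c j = 0 := by
  set nc : Finset ι := Finset.univ.filter (fun j => ¬ ∃ t : ℝ, u j = t • v) with hnc
  obtain ⟨x₀, hx₀v, hx₀⟩ := exists_generic nc v hv u (fun j hj => (Finset.mem_filter.mp hj).2)
  -- find ε > 0 with ε * |u j ⬝ᵥ x| ≤ |u j ⬝ᵥ x₀| for all j ∈ nc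
  obtain ⟨ε, hε0, hε⟩ : ∃ ε : ℝ, 0 < ε ∧ ∀ j ∈ nc, ε * |u j ⬝ᵥ x| ≤ |u j ⬝ᵥ x₀| := by
    rcases nc.eq_empty_or_nonempty with he | hne
    · exact ⟨1, one_pos, by simp [he]⟩
    · set g : ι → ℝ := fun j => |u j ⬝ᵥ x₀| / (|u j ⬝ᵥ x| + 1) with hg
      refine ⟨nc.inf' hne g, ?_, ?_⟩
      · rw [Finset.lt_inf'_iff]
        intro j hj
        have h1 : 0 < |u j ⬝ᵥ x₀| := abs_pos.mpr (hx₀ j hj)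
        have h2 : 0 < |u j ⬝ᵥ x| + 1 := by positivity
        positivity
      · intro j hj
        have h1 : nc.inf' hne g ≤ g j := Finset.inf'_le _ hj
        have h2 : 0 ≤ |u j ⬝ᵥ x| := abs_nonneg _
        have h3 : 0 < |u j ⬝ᵥ x| + 1 := by linarith
        calc nc.inf' hne g * |u j ⬝ᵥ x| ≤ g j * |u j ⬝ᵥ x| := by
              apply mul_le_mul_of_nonneg_right h1 h2
          _ ≤ |u j ⬝ᵥ x₀| := by
              rw [hg]
              rw [div_mul_eq_mul_div, div_le_iff₀ h3]
              nlinarith [abs_nonneg (u j ⬝ᵥ x₀)]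
  -- main computation
  have key := h (x₀ + ε • x)
  have key2 := h (x₀ - ε • x)
  have key0 := h x₀
  have hsplit : ∀ y : Fin d → ℝ, ∑ j, |u j ⬝ᵥ y| • c j
      = ∑ j ∈ Finset.univ.filter (fun j => ∃ t : ℝ, u j = t • v), |u j ⬝ᵥ y| • c j
        + ∑ j ∈ nc, |u j ⬝ᵥ y| • c j := by
    intro y
    rw [hnc, ← Finset.sum_filter_add_sum_filter_not Finset.univ (fun j => ∃ t : ℝ, u j = t • v)]
  rw [hsplit] at key key2 key0
  -- vanish at x₀ on collinear part
  have hcol0 : ∀ j ∈ Finset.univ.filter (fun j => ∃ t : ℝ, u j = t • v), u j ⬝ᵥ x₀ = 0 := by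
    intro j hj
    obtain ⟨t, htj⟩ := (Finset.mem_filter.mp hj).2
    rw [htj, smul_dotProduct, smul_eq_mul, hx₀v, mul_zero]
  have hnc0 : ∑ j ∈ nc, |u j ⬝ᵥ x₀| • c j = 0 := by
    have : ∑ j ∈ Finset.univ.filter (fun j => ∃ t : ℝ, u j = t • v), |u j ⬝ᵥ x₀| • c j = 0 := by
      apply Finset.sum_eq_zero
      intro j hj
      rw [hcol0 j hj, abs_zero, zero_smul]
    rw [this, zero_add] at key0
    exact key0
  have hadd : (∑ j ∈ Finset.univ.filter (fun j => ∃ t : ℝ, u j = t • v), (|u j ⬝ᵥ (x₀ + ε • x)| + |u j ⬝ᵥ (x₀ - ε • x)|) • c j)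
      + ∑ j ∈ nc, (|u j ⬝ᵥ (x₀ + ε • x)| + |u j ⬝ᵥ (x₀ - ε • x)|) • c j = 0 := by
    simp only [add_smul, Finset.sum_add_distrib]
    calc (∑ j ∈ Finset.univ.filter (fun j => ∃ t : ℝ, u j = t • v), |u j ⬝ᵥ (x₀ + ε • x)| • c j
            + ∑ j ∈ Finset.univ.filter (fun j => ∃ t : ℝ, u j = t • v), |u j ⬝ᵥ (x₀ - ε • x)| • c j)
          + (∑ j ∈ nc, |u j ⬝ᵥ (x₀ + ε • x)| • c j
            + ∑ j ∈ nc, |u j ⬝ᵥ (x₀ - ε • x)| • c j)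
        = (∑ j ∈ Finset.univ.filter (fun j => ∃ t : ℝ, u j = t • v), |u j ⬝ᵥ (x₀ + ε • x)| • c j
            + ∑ j ∈ nc, |u j ⬝ᵥ (x₀ + ε • x)| • c j)
          + (∑ j ∈ Finset.univ.filter (fun j => ∃ t : ℝ, u j = t • v), |u j ⬝ᵥ (x₀ - ε • x)| • c j
            + ∑ j ∈ nc, |u j ⬝ᵥ (x₀ - ε • x)| • c j) := by abel
      _ = 0 := by rw [key, key2, add_zero]
  -- rewrite the two parts of hadd
  have hdot : ∀ j, u j ⬝ᵥ (x₀ + ε • x) = u j ⬝ᵥ x₀ + ε * (u j ⬝ᵥ x) := by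
    intro j; rw [dotProduct_add, dotProduct_smul, smul_eq_mul]
  have hdot2 : ∀ j, u j ⬝ᵥ (x₀ - ε • x) = u j ⬝ᵥ x₀ - ε * (u j ⬝ᵥ x) := by
    intro j; rw [dotProduct_sub, dotProduct_smul, smul_eq_mul]
  have hP2 : ∑ j ∈ Finset.univ.filter (fun j => ∃ t : ℝ, u j = t • v), (|u j ⬝ᵥ (x₀ + ε • x)| + |u j ⬝ᵥ (x₀ - ε • x)|) • c j
      = (2 * ε) • ∑ j ∈ Finset.univ.filter (fun j => ∃ t : ℝ, u j = t • v), |u j ⬝ᵥ x| • c j := by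
    rw [Finset.smul_sum]
    apply Finset.sum_congr rfl
    intro j hj
    rw [hdot j, hdot2 j, hcol0 j hj, zero_add, zero_sub, abs_neg, smul_smul]
    congr 1
    rw [abs_mul, abs_of_pos hε0]
    ring
  have hnc2 : ∑ j ∈ nc, (|u j ⬝ᵥ (x₀ + ε • x)| + |u j ⬝ᵥ (x₀ - ε • x)|) • c j
      = (2 : ℝ) • ∑ j ∈ nc, |u j ⬝ᵥ x₀| • c j := by
    rw [Finset.smul_sum]
    apply Finset.sum_congr rfl
    intro j hj
    rw [hdot j, hdot2 j, smul_smul]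
    congr 1
    apply abs_add_abs_sub_of_le
    rw [abs_mul, abs_of_pos hε0]
    exact hε j hj
  rw [hP2, hnc2, hnc0, smul_zero, add_zero] at hadd
  rcases smul_eq_zero.mp hadd with h2e | hgood
  · exfalso; nlinarith
  · exact hgood


lemma sum_filter_sum_type {A B M : Type*} [Fintype A] [Fintype B] [AddCommMonoid M]
    (P : A ⊕ B → Prop) [DecidablePred P] (f : A ⊕ B → M) :
    ∑ j ∈ Finset.univ.filter P, f j
      = (∑ a ∈ Finset.univ.filter (fun a => P (Sum.inl a)), f (Sum.inl a))
        + ∑ b ∈ Finset.univ.filter (fun b => P (Sum.inr b)), f (Sum.inr b) := by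
  rw [Finset.sum_filter, Finset.sum_filter, Finset.sum_filter, Fintype.sum_sum_type]

lemma relu_mul_neg {t a : ℝ} (ht : t < 0) : max 0 (t * a) = (-t) * (max 0 a - a) := by
  rcases le_total 0 a with h | h
  · rw [max_eq_right h, max_eq_left (by nlinarith)]; ring
  · rw [max_eq_left h, max_eq_right (by nlinarith)]; ring

lemma relu_mul_pos {t a : ℝ} (ht : 0 < t) : max 0 (t * a) = t * max 0 a := by
  rcases le_total 0 a with h | h
  · rw [max_eq_right h, max_eq_right (by nlinarith)]
  · rw [max_eq_left h, max_eq_left (by nlinarith), mul_zero]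

lemma mulVec_row_dot {m n R : Type*} [Fintype n] [NonUnitalNonAssocSemiring R]
    (M : Matrix m n R) (v : n → R) (i : m) : (M *ᵥ v) i = M i ⬝ᵥ v := rfl

theorem perturbed_skip_absorption_necessity
    (d N : ℕ) (hd : 2 ≤ d) (hNd : d ≤ N)
    (Z Z' : Matrix (Fin d) (Fin d) ℝ) (hZ : IsUnit (Z - Z'))
    (Wup Wup' : Matrix (Fin N) (Fin d) ℝ)
    (Wdown Wdown' : Matrix (Fin d) (Fin N) ℝ)
    (habs : ∀ x : Fin d → ℝ,
      Wdown.mulVec (fun i => max 0 (Wup.mulVec x i)) + Z.mulVec x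
        = Wdown'.mulVec (fun i => max 0 (Wup'.mulVec x i)) + Z'.mulVec x)
    (hrows : ∀ i, (Wup * (Z - Z')⁻¹) i ≠ 0)
    (hnc : ∀ i j, i ≠ j → ∀ t : ℝ,
      (Wup * (Z - Z')⁻¹) i ≠ t • (Wup * (Z - Z')⁻¹) j)
    (hcols : ∀ j, (fun i => Wdown i j) ≠ 0) :
    ∃ S : Finset (Fin N), d ≤ S.card ∧
      Wdown * Matrix.diagonal (fun i => if i ∈ S then (1 : ℝ) else 0) * Wup
        = Z' - Z := by
  classical
  -- transferred row facts
  have hw0 : ∀ i, Wup i ≠ 0 := by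
    intro i h
    apply hrows i
    rw [Matrix.mul_apply_eq_vecMul, h, Matrix.zero_vecMul]
  have hncw : ∀ i j, i ≠ j → ∀ t : ℝ, Wup i ≠ t • Wup j := by
    intro i j hij t h
    apply hnc i j hij t
    rw [Matrix.mul_apply_eq_vecMul, Matrix.mul_apply_eq_vecMul, h, Matrix.smul_vecMul]
  -- the basic pointwise identity
  have hId : ∀ x : Fin d → ℝ,
      (∑ j, (max 0 (Wup j ⬝ᵥ x)) • (fun k => Wdown k j)) + (Z - Z') *ᵥ x
        = ∑ j, (max 0 (Wup' j ⬝ᵥ x)) • (fun k => Wdown' k j) := by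
    intro x
    have h := habs x
    rw [mulVec_eq_sum_cols Wdown, mulVec_eq_sum_cols Wdown'] at h
    simp only [mulVec_row_dot] at h
    rw [Matrix.sub_mulVec, add_sub, sub_eq_iff_eq_add]
    exact h
  -- the even part identity
  have hEven : ∀ x : Fin d → ℝ,
      ∑ j, |Wup j ⬝ᵥ x| • (fun k => Wdown k j)
        = ∑ j, |Wup' j ⬝ᵥ x| • (fun k => Wdown' k j) := by
    intro x
    have h1 := hId x
    have h2 := hId (-x)
    simp only [dotProduct_neg, Matrix.mulVec_neg] at h2
    calc ∑ j, |Wup j ⬝ᵥ x| • (fun k => Wdown k j)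
        = ∑ j, ((max 0 (Wup j ⬝ᵥ x)) + max 0 (-(Wup j ⬝ᵥ x))) • (fun k => Wdown k j) := by
          simp_rw [relu_add_relu_neg]
      _ = (∑ j, (max 0 (Wup j ⬝ᵥ x)) • (fun k => Wdown k j))
            + ∑ j, (max 0 (-(Wup j ⬝ᵥ x))) • (fun k => Wdown k j) := by
          simp_rw [add_smul]; rw [Finset.sum_add_distrib]
      _ = ((∑ j, (max 0 (Wup j ⬝ᵥ x)) • (fun k => Wdown k j)) + (Z - Z') *ᵥ x)
            + ((∑ j, (max 0 (-(Wup j ⬝ᵥ x))) • (fun k => Wdown k j)) - (Z - Z') *ᵥ x) := by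
          abel
      _ = (∑ j, (max 0 (Wup' j ⬝ᵥ x)) • (fun k => Wdown' k j))
            + ∑ j, (max 0 (-(Wup' j ⬝ᵥ x))) • (fun k => Wdown' k j) := by
          rw [h1, sub_eq_add_neg, h2]
      _ = ∑ j, ((max 0 (Wup' j ⬝ᵥ x)) + max 0 (-(Wup' j ⬝ᵥ x))) • (fun k => Wdown' k j) := by
          simp_rw [add_smul]; rw [Finset.sum_add_distrib]
      _ = ∑ j, |Wup' j ⬝ᵥ x| • (fun k => Wdown' k j) := by
          simp_rw [relu_add_relu_neg]
  -- combined single-sum form over a sum type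
  set U : Fin N ⊕ Fin N → Fin d → ℝ := Sum.elim (fun i => Wup i) (fun i => Wup' i) with hU
  set C : Fin N ⊕ Fin N → Fin d → ℝ :=
    Sum.elim (fun j k => Wdown k j) (fun j => -(fun k => Wdown' k j)) with hC
  have hComb : ∀ x : Fin d → ℝ, ∑ j, |U j ⬝ᵥ x| • C j = 0 := by
    intro x
    rw [Fintype.sum_sum_type]
    simp only [hU, hC, Sum.elim_inl, Sum.elim_inr, smul_neg]
    rw [Finset.sum_neg_distrib, hEven x]
    abel
  -- separation per class, and collapse of the left class to {i}
  have hkey0 : ∀ (i : Fin N) (x : Fin d → ℝ),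
      |Wup i ⬝ᵥ x| • (fun k => Wdown k i)
        = ∑ b ∈ Finset.univ.filter (fun b => ∃ t : ℝ, Wup' b = t • Wup i),
            |Wup' b ⬝ᵥ x| • (fun k => Wdown' k b) := by
    intro i x
    have hsep := class_separation U C hComb (Wup i) (hw0 i) x
    rw [sum_filter_sum_type] at hsep
    simp only [hU, hC, Sum.elim_inl, Sum.elim_inr, smul_neg] at hsep
    have hself : Finset.univ.filter (fun a : Fin N => ∃ t : ℝ, Wup a = t • Wup i) = {i} := by
      ext a
      simp only [Finset.mem_filter, Finset.mem_univ, true_and, Finset.mem_singleton]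
      constructor
      · rintro ⟨t, ht⟩
        by_contra hne
        exact hncw a i hne t ht
      · rintro rfl
        exact ⟨1, (one_smul _ _).symm⟩
    rw [hself, Finset.sum_singleton, Finset.sum_neg_distrib, add_neg_eq_zero] at hsep
    exact hsep
  -- existence of partners
  have hpart : ∀ i : Fin N, ∃ j, ∃ t : ℝ, t ≠ 0 ∧ Wup' j = t • Wup i := by
    intro i
    have hii : Wup i ⬝ᵥ Wup i ≠ 0 := fun h => hw0 i (dotProduct_self_eq_zero.mp h)
    have hlhs : |Wup i ⬝ᵥ Wup i| • (fun k => Wdown k i) ≠ (0 : Fin d → ℝ) :=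
      smul_ne_zero (abs_ne_zero.mpr hii) (hcols i)
    rw [hkey0 i (Wup i)] at hlhs
    obtain ⟨b, hbmem, hbne⟩ := Finset.exists_ne_zero_of_sum_ne_zero hlhs
    obtain ⟨t, hbt⟩ := (Finset.mem_filter.mp hbmem).2
    refine ⟨b, t, ?_, hbt⟩
    intro ht0
    rw [ht0, zero_smul] at hbt
    apply hbne
    rw [hbt, zero_dotProduct, abs_zero, zero_smul]
  choose φ τ hτ0 hτ using hpart
  -- injectivity and surjectivity of φ
  have hφinj : Function.Injective φ := by
    intro i i' h
    by_contra hne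
    have he : τ i • Wup i = τ i' • Wup i' := by rw [← hτ i, ← hτ i', h]
    apply hncw i i' hne ((τ i)⁻¹ * τ i')
    calc Wup i = (τ i)⁻¹ • (τ i • Wup i) := by
          rw [smul_smul, inv_mul_cancel₀ (hτ0 i), one_smul]
      _ = (τ i)⁻¹ • (τ i' • Wup i') := by rw [he]
      _ = ((τ i)⁻¹ * τ i') • Wup i' := by rw [smul_smul]
  have hφsurj : Function.Surjective φ := Finite.injective_iff_surjective.mp hφinj
  have hw'0 : ∀ j, Wup' j ≠ 0 := by
    intro j
    obtain ⟨m, rfl⟩ := hφsurj j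
    rw [hτ m]
    exact smul_ne_zero (hτ0 m) (hw0 m)
  -- the right class is exactly {φ i}
  have hfilterQ : ∀ i : Fin N,
      Finset.univ.filter (fun b : Fin N => ∃ t : ℝ, Wup' b = t • Wup i) = {φ i} := by
    intro i
    ext b
    simp only [Finset.mem_filter, Finset.mem_univ, true_and, Finset.mem_singleton]
    constructor
    · rintro ⟨s, hs⟩
      obtain ⟨m, rfl⟩ := hφsurj b
      have hs0 : s ≠ 0 := by
        intro h0
        apply hw'0 (φ m)
        rw [hs, h0, zero_smul]
      have hmi : m = i := by
        by_contra hne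
        apply hncw m i hne ((τ m)⁻¹ * s)
        calc Wup m = (τ m)⁻¹ • (τ m • Wup m) := by
              rw [smul_smul, inv_mul_cancel₀ (hτ0 m), one_smul]
          _ = (τ m)⁻¹ • (s • Wup i) := by rw [← hτ m, hs]
          _ = ((τ m)⁻¹ * s) • Wup i := by rw [smul_smul]
      rw [hmi]
    · rintro rfl
      exact ⟨τ i, hτ i⟩
  have hkey : ∀ (i : Fin N) (x : Fin d → ℝ),
      |Wup i ⬝ᵥ x| • (fun k => Wdown k i)
        = |Wup' (φ i) ⬝ᵥ x| • (fun k => Wdown' k (φ i)) := by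
    intro i x
    rw [hkey0 i x, hfilterQ i, Finset.sum_singleton]
  -- coefficient relation
  have hcoef : ∀ i : Fin N,
      (fun k => Wdown k i) = |τ i| • (fun k => Wdown' k (φ i)) := by
    intro i
    have hii : Wup i ⬝ᵥ Wup i ≠ 0 := fun h => hw0 i (dotProduct_self_eq_zero.mp h)
    have h := hkey i (Wup i)
    rw [hτ i, smul_dotProduct, smul_eq_mul, abs_mul, mul_comm, mul_smul] at h
    exact smul_right_injective _ (abs_ne_zero.mpr hii) h
  -- the subset S
  set S : Finset (Fin N) := Finset.univ.filter (fun i => τ i < 0) with hS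
  -- final pointwise identity
  have hfinal : ∀ x : Fin d → ℝ,
      (Z - Z') *ᵥ x = - ∑ i ∈ S, (Wup i ⬝ᵥ x) • (fun k => Wdown k i) := by
    intro x
    have h1 := hId x
    have hre : ∑ j, (max 0 (Wup' j ⬝ᵥ x)) • (fun k => Wdown' k j)
        = ∑ i, (max 0 (Wup' (φ i) ⬝ᵥ x)) • (fun k => Wdown' k (φ i)) :=
      (Fintype.sum_bijective φ ⟨hφinj, hφsurj⟩ _ _ (fun i => rfl)).symm
    have hterm : ∀ i : Fin N,
        (max 0 (Wup' (φ i) ⬝ᵥ x)) • (fun k => Wdown' k (φ i))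
          = (max 0 (Wup i ⬝ᵥ x)) • (fun k => Wdown k i)
            - (if τ i < 0 then (Wup i ⬝ᵥ x) • (fun k => Wdown k i) else 0) := by
      intro i
      have hdq : Wup' (φ i) ⬝ᵥ x = τ i * (Wup i ⬝ᵥ x) := by
        rw [hτ i, smul_dotProduct, smul_eq_mul]
      rcases lt_trichotomy (τ i) 0 with hlt | h0 | hgt
      · rw [if_pos hlt, hdq, hcoef i]
        funext k
        simp only [Pi.smul_apply, Pi.sub_apply, smul_eq_mul]
        rw [relu_mul_neg hlt, abs_of_neg hlt]
        ring
      · exact absurd h0 (hτ0 i)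
      · rw [if_neg (by linarith), sub_zero, hdq, hcoef i]
        funext k
        simp only [Pi.smul_apply, smul_eq_mul]
        rw [relu_mul_pos hgt, abs_of_pos hgt]
        ring
    rw [hre] at h1
    simp_rw [hterm] at h1
    rw [Finset.sum_sub_distrib] at h1
    have h2 := add_left_cancel (h1.trans (sub_eq_add_neg _ _))
    rw [h2]
    congr 1
    rw [hS, Finset.sum_filter]
  -- conclude the matrix identity
  have heq : Wdown * Matrix.diagonal (fun i => if i ∈ S then (1 : ℝ) else 0) * Wup
      = Z' - Z := by
    have hmv : ∀ x : Fin d → ℝ,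
        (Wdown * Matrix.diagonal (fun i => if i ∈ S then (1 : ℝ) else 0) * Wup) *ᵥ x
          = (Z' - Z) *ᵥ x := by
      intro x
      rw [← Matrix.mulVec_mulVec, ← Matrix.mulVec_mulVec, mulVec_eq_sum_cols Wdown]
      have hdg : ∀ j, (Matrix.diagonal (fun i => if i ∈ S then (1 : ℝ) else 0)
          *ᵥ (Wup *ᵥ x)) j = (if j ∈ S then (1 : ℝ) else 0) * (Wup j ⬝ᵥ x) := by
        intro j
        rw [Matrix.mulVec_diagonal, mulVec_row_dot]
      simp_rw [hdg]
      have hZx : (Z' - Z) *ᵥ x = - ((Z - Z') *ᵥ x) := by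
        rw [← Matrix.neg_mulVec, neg_sub]
      rw [hZx, hfinal x, neg_neg, hS, Finset.sum_filter]
      apply Finset.sum_congr rfl
      intro j _
      by_cases hj : τ j < 0
      · simp [hS, hj]
      · simp [hS, hj]
    ext k l
    have h := hmv (Pi.single l 1)
    rw [Matrix.mulVec_single, Matrix.mulVec_single] at h
    simpa using congrFun h k
  refine ⟨S, ?_, heq⟩
  -- cardinality via rank
  have hunit' : IsUnit (Z' - Z) := by
    have := hZ.neg
    rwa [neg_sub] at this
  have hr1 : (Z' - Z).rank = d := by
    rw [Matrix.rank_of_isUnit _ hunit', Fintype.card_fin]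
  have hcard : Fintype.card {i // (if i ∈ S then (1 : ℝ) else 0) ≠ 0} = S.card := by
    rw [Fintype.card_subtype]
    congr 1
    ext i
    by_cases hi : i ∈ S <;> simp [hi]
  have hr2 : (Z' - Z).rank ≤ S.card := by
    rw [← heq]
    calc (Wdown * Matrix.diagonal (fun i => if i ∈ S then (1 : ℝ) else 0) * Wup).rank
        ≤ (Wdown * Matrix.diagonal (fun i => if i ∈ S then (1 : ℝ) else 0)).rank :=
          Matrix.rank_mul_le_left _ _
      _ ≤ (Matrix.diagonal (fun i => if i ∈ S then (1 : ℝ) else 0)).rank :=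
          Matrix.rank_mul_le_right _ _
      _ = Fintype.card {i // (if i ∈ S then (1 : ℝ) else 0) ≠ 0} := Matrix.rank_diagonal _
      _ = S.card := hcard
  rw [hr1] at hr2
  exact hr2
end
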